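/- Assume k := inf_{n ≥ 1} ν(n)/(n μ) > 0. Define ṽ_Λ = w_Λ/‖w_Λ‖, ṽ_n = ṽ_{n+1} α_n / ‖ṽ_{n+1} α_n‖ for 0 ≤ n < Λ, v_0 = ṽ_0, and v_n = ṽ_n / (‖ṽ_n α_{n-1}‖ · ‖ṽ_{n-1} α_{n-2}‖ ⋯ ‖ṽ_1 α_0‖) for 1 ≤ n ≤ Λ. Then the total mass V_Λ = Σ_{n=0}^{Λ} ‖v_n‖ satisfies 1 ≤ V_Λ ≤ e^{1/k}; in particular this bound is uniform in Λ. -/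

import Mathlib

open Matrix Finset

noncomputable section

/-- The transfer matrix `α_n`. -/
def alphaMat (μ : ℝ) (ν g κ : ℕ → ℝ) (n : ℕ) : Matrix (Fin 2) (Fin 2) ℝ :=
  if n = 0 then
    (ν 1 / μ) • !![(κ 0 + μ) / g 0, 1; κ 0 / g 0, 1]
  else
    (ν (n + 1) / μ) • !![(κ n + μ) / (g n + ν n), 1; κ n / (g n + ν n), 1]

/-- The row vector `w_Λ = (κ(Λ), g(Λ)+ν(Λ))`. -/
def wvec (ν g κ : ℕ → ℝ) (Λ : ℕ) : Fin 2 → ℝ := ![κ Λ, g Λ + ν Λ]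

/-- The `1`-norm on row vectors with nonnegative entries: the sum of the entries. -/
def norm1 (v : Fin 2 → ℝ) : ℝ := v 0 + v 1

/-- `tv k = ṽ_{Λ-k}`: the normalized vectors, `ṽ_Λ = w_Λ/‖w_Λ‖` and
`ṽ_n = ṽ_{n+1} α_n / ‖ṽ_{n+1} α_n‖`. -/
def tv (μ : ℝ) (ν g κ : ℕ → ℝ) (Λ : ℕ) : ℕ → (Fin 2 → ℝ)
  | 0 => (norm1 (wvec ν g κ Λ))⁻¹ • wvec ν g κ Λ
  | k + 1 =>
    (norm1 ((tv μ ν g κ Λ k) ᵥ* alphaMat μ ν g κ (Λ - 1 - k)))⁻¹ •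
      ((tv μ ν g κ Λ k) ᵥ* alphaMat μ ν g κ (Λ - 1 - k))

/-- The renormalized vectors `v_n = ṽ_n / (‖ṽ_n α_{n-1}‖⋯‖ṽ_1 α_0‖)` (`v_0 = ṽ_0`). -/
def vv (μ : ℝ) (ν g κ : ℕ → ℝ) (Λ n : ℕ) : Fin 2 → ℝ :=
  (∏ j ∈ Finset.Icc 1 n,
      norm1 ((tv μ ν g κ Λ (Λ - j)) ᵥ* alphaMat μ ν g κ (j - 1)))⁻¹ •
    tv μ ν g κ Λ (Λ - n)

section Aux

variable {μ : ℝ} (hμ : 0 < μ) {ν g κ : ℕ → ℝ}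
  (hν0 : ν 0 = 0) (hν : ∀ n, 1 ≤ n → 0 < ν n) (hg : ∀ n, 0 < g n) (hκ : ∀ n, 0 ≤ κ n)

include hν0 hν in
lemma nu_nonneg (n : ℕ) : 0 ≤ ν n := by
  rcases Nat.eq_zero_or_pos n with h | h
  · simp [h, hν0]
  · exact (hν n h).le

include hμ hν0 hν hg hκ in
lemma vecMul_alpha_nonneg {v : Fin 2 → ℝ} (hv : ∀ i, 0 ≤ v i) (n : ℕ) (i : Fin 2) :
    0 ≤ (v ᵥ* alphaMat μ ν g κ n) i := by
  have hD : ∀ m : ℕ, 0 < g m + ν m := fun m =>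
    add_pos_of_pos_of_nonneg (hg m) (nu_nonneg hν0 hν m)
  have hνn : 0 ≤ ν (n + 1) := nu_nonneg hν0 hν (n + 1)
  have hv0 := hv 0
  have hv1 := hv 1
  have hνμ : 0 ≤ ν (n + 1) / μ := div_nonneg hνn hμ.le
  rcases eq_or_ne n 0 with rfl | hn
  · have hb : 0 ≤ (κ 0 + μ) / g 0 := div_nonneg (by linarith [hκ 0]) (hg 0).le
    have hc' : 0 ≤ κ 0 / g 0 := div_nonneg (hκ 0) (hg 0).le
    fin_cases i <;>
      simp [alphaMat, Matrix.vecMul, dotProduct, Fin.sum_univ_two]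
    · exact add_nonneg (mul_nonneg hv0 (mul_nonneg hνμ hb))
        (mul_nonneg hv1 (mul_nonneg hνμ hc'))
    · exact add_nonneg (mul_nonneg hv0 hνμ) (mul_nonneg hv1 hνμ)
  · have hb : 0 ≤ (κ n + μ) / (g n + ν n) := div_nonneg (by linarith [hκ n]) (hD n).le
    have hc' : 0 ≤ κ n / (g n + ν n) := div_nonneg (hκ n) (hD n).le
    fin_cases i <;>
      simp [alphaMat, hn, Matrix.vecMul, dotProduct, Fin.sum_univ_two]
    · exact add_nonneg (mul_nonneg hv0 (mul_nonneg hνμ hb))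
        (mul_nonneg hv1 (mul_nonneg hνμ hc'))
    · exact add_nonneg (mul_nonneg hv0 hνμ) (mul_nonneg hv1 hνμ)

include hμ hν0 hν hg hκ in
lemma vecMul_alpha_norm_ge {v : Fin 2 → ℝ} (hv : ∀ i, 0 ≤ v i) (n : ℕ) :
    ν (n + 1) / μ * norm1 v ≤ norm1 (v ᵥ* alphaMat μ ν g κ n) := by
  have h0 : 0 ≤ (v ᵥ* alphaMat μ ν g κ n) 0 := vecMul_alpha_nonneg hμ hν0 hν hg hκ hv n 0
  have h1 : (v ᵥ* alphaMat μ ν g κ n) 1 = ν (n + 1) / μ * (v 0 + v 1) := by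
    rcases eq_or_ne n 0 with rfl | hn
    · simp [alphaMat, Matrix.vecMul, dotProduct, Fin.sum_univ_two]; ring
    · simp [alphaMat, hn, Matrix.vecMul, dotProduct, Fin.sum_univ_two]; ring
  have : norm1 (v ᵥ* alphaMat μ ν g κ n) = (v ᵥ* alphaMat μ ν g κ n) 0
      + ν (n + 1) / μ * (v 0 + v 1) := by rw [norm1, h1]
  rw [this, norm1]
  linarith

include hμ hν0 hν hg hκ in
lemma tv_prop (Λ : ℕ) (m : ℕ) :
    (∀ i, 0 ≤ tv μ ν g κ Λ m i) ∧ norm1 (tv μ ν g κ Λ m) = 1 := by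
  induction m with
  | zero =>
    have hw : ∀ i, 0 ≤ wvec ν g κ Λ i := by
      intro i; fin_cases i <;> simp [wvec]
      · exact hκ Λ
      · exact add_nonneg (hg Λ).le (nu_nonneg hν0 hν Λ)
    have hwn : 0 < norm1 (wvec ν g κ Λ) := by
      have : norm1 (wvec ν g κ Λ) = κ Λ + (g Λ + ν Λ) := by simp [norm1, wvec]
      rw [this]
      have := hκ Λ; have := hg Λ; have := nu_nonneg hν0 hν Λ
      linarith
    constructor
    · intro i
      simp only [tv, Pi.smul_apply, smul_eq_mul]
      exact mul_nonneg (inv_nonneg.2 hwn.le) (hw i)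
    · simp only [tv, norm1, Pi.smul_apply, smul_eq_mul]
      rw [← mul_add]
      exact inv_mul_cancel₀ (by rw [norm1] at hwn; exact hwn.ne')
  | succ m ih =>
    obtain ⟨hnn, hone⟩ := ih
    set u := tv μ ν g κ Λ m ᵥ* alphaMat μ ν g κ (Λ - 1 - m) with hu
    have hun : ∀ i, 0 ≤ u i := fun i => vecMul_alpha_nonneg hμ hν0 hν hg hκ hnn _ i
    have hnpos : 0 < norm1 u := by
      have h1 := vecMul_alpha_norm_ge hμ hν0 hν hg hκ hnn (Λ - 1 - m)
      rw [hone, mul_one] at h1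
      have hν' := hν (Λ - 1 - m + 1) (by omega)
      calc (0:ℝ) < ν (Λ - 1 - m + 1) / μ := div_pos hν' hμ
        _ ≤ _ := h1
    constructor
    · intro i
      simp only [tv, ← hu, Pi.smul_apply, smul_eq_mul]
      exact mul_nonneg (inv_nonneg.2 hnpos.le) (hun i)
    · simp only [tv, ← hu, norm1, Pi.smul_apply, smul_eq_mul]
      rw [← mul_add]
      exact inv_mul_cancel₀ (by rw [norm1] at hnpos; exact hnpos.ne')

lemma prod_k_mul (k : ℝ) (n : ℕ) :
    ∏ j ∈ Finset.Icc 1 n, (k * j) = k ^ n * n.factorial  := by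
  induction n with
  | zero => simp
  | succ n ih =>
    rw [Finset.prod_Icc_succ_top (by omega), ih, Nat.factorial_succ]
    push_cast
    ring

end Aux

/-- Proposition `bounds`: the total mass `V_Λ = Σ_{n=0}^Λ ‖v_n‖`
satisfies `1 ≤ V_Λ ≤ e^{1/k}`, a bound uniform in `Λ`. -/
theorem total_mass_uniform_bound
    (Λ : ℕ) (hΛ : 1 ≤ Λ) (μ : ℝ) (hμ : 0 < μ) (ν g κ : ℕ → ℝ)
    (hν0 : ν 0 = 0) (hν : ∀ n, 1 ≤ n → 0 < ν n)
    (hg : ∀ n, 0 < g n) (hκ : ∀ n, 0 ≤ κ n)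
    (k : ℝ) (hk : k = sInf ((fun n : ℕ => ν n / (n * μ)) '' {n : ℕ | 1 ≤ n}))
    (hkpos : 0 < k) :
    1 ≤ ∑ n ∈ Finset.range (Λ + 1), norm1 (vv μ ν g κ Λ n) ∧
    ∑ n ∈ Finset.range (Λ + 1), norm1 (vv μ ν g κ Λ n) ≤ Real.exp (1 / k) := by
  -- the normalization constants
  set c : ℕ → ℝ := fun j =>
    norm1 ((tv μ ν g κ Λ (Λ - j)) ᵥ* alphaMat μ ν g κ (j - 1)) with hc
  have htv := tv_prop hμ hν0 hν hg hκ Λ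
  -- lower bound on c j
  have hcb : ∀ j, 1 ≤ j → k * j ≤ c j := by
    intro j hj
    -- k ≤ ν j / (j * μ)
    have hmem : ν j / (j * μ) ∈ ((fun n : ℕ => ν n / (n * μ)) '' {n : ℕ | 1 ≤ n}) :=
      ⟨j, hj, rfl⟩
    have hbdd : BddBelow ((fun n : ℕ => ν n / (n * μ)) '' {n : ℕ | 1 ≤ n}) := by
      refine ⟨0, ?_⟩
      rintro x ⟨n, hn, rfl⟩
      have hnp : (0:ℝ) < n := by exact_mod_cast hn
      exact div_nonneg (hν n hn).le (by positivity)
    have hkle : k ≤ ν j / (j * μ) := hk ▸ csInf_le hbdd hmem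
    have hjpos : (0:ℝ) < j := by exact_mod_cast hj
    have h1 : k * j ≤ ν j / μ := by
      have := mul_le_mul_of_nonneg_right hkle hjpos.le
      calc k * j ≤ ν j / (j * μ) * j := this
        _ = ν j / μ := by field_simp
    -- ν j / μ ≤ c j
    have h2 := vecMul_alpha_norm_ge hμ hν0 hν hg hκ (htv (Λ - j)).1 (j - 1)
    rw [(htv (Λ - j)).2, mul_one] at h2
    have hje : j - 1 + 1 = j := by omega
    rw [hje] at h2
    exact h1.trans h2
  have hcpos : ∀ j, 1 ≤ j → 0 < c j := by
    intro j hj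
    have hjp : (0:ℝ) < j := by exact_mod_cast hj
    exact lt_of_lt_of_le (mul_pos hkpos hjp) (hcb j hj)
  -- norm1 (vv n) = (∏ c)⁻¹
  have hvv : ∀ n, norm1 (vv μ ν g κ Λ n) = (∏ j ∈ Finset.Icc 1 n, c j)⁻¹ := by
    intro n
    have : norm1 (vv μ ν g κ Λ n)
        = (∏ j ∈ Finset.Icc 1 n, c j)⁻¹ * norm1 (tv μ ν g κ Λ (Λ - n)) := by
      simp [vv, hc, norm1, Pi.smul_apply, smul_eq_mul, mul_add]
    rw [this, (htv (Λ - n)).2, mul_one]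
  have hprodpos : ∀ n, 0 < ∏ j ∈ Finset.Icc 1 n, c j := fun n =>
    Finset.prod_pos fun j hj => hcpos j (Finset.mem_Icc.1 hj).1
  constructor
  · -- lower bound: term n = 0 equals 1
    have h0 : norm1 (vv μ ν g κ Λ 0) = 1 := by
      rw [hvv 0]; simp
    calc (1:ℝ) = norm1 (vv μ ν g κ Λ 0) := h0.symm
      _ ≤ ∑ n ∈ Finset.range (Λ + 1), norm1 (vv μ ν g κ Λ n) :=
        Finset.single_le_sum (f := fun n => norm1 (vv μ ν g κ Λ n))
          (fun n _ => by
            show (0:ℝ) ≤ norm1 (vv μ ν g κ Λ n)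
            rw [hvv n]; exact (inv_pos.2 (hprodpos n)).le)
          (Finset.mem_range.2 (by omega))
  · -- upper bound
    have hterm : ∀ n, norm1 (vv μ ν g κ Λ n) ≤ (1 / k) ^ n / n.factorial  := by
      intro n
      rw [hvv n]
      have hle : ∏ j ∈ Finset.Icc 1 n, (k * j) ≤ ∏ j ∈ Finset.Icc 1 n, c j := by
        refine Finset.prod_le_prod (fun j hj => ?_) (fun j hj => hcb j (Finset.mem_Icc.1 hj).1)
        have hj1 := (Finset.mem_Icc.1 hj).1
        have hjp : (0:ℝ) < j := by exact_mod_cast hj1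
        exact (mul_pos hkpos hjp).le
      rw [prod_k_mul] at hle
      have hkn : (0:ℝ) < k ^ n * n.factorial  := by positivity
      have := inv_anti₀ hkn hle
      calc (∏ j ∈ Finset.Icc 1 n, c j)⁻¹ ≤ (k ^ n * (n.factorial : ℝ))⁻¹ := this
        _ = (1 / k) ^ n / n.factorial  := by
          rw [mul_inv, one_div, inv_pow]
          ring
    calc ∑ n ∈ Finset.range (Λ + 1), norm1 (vv μ ν g κ Λ n)
        ≤ ∑ n ∈ Finset.range (Λ + 1), (1 / k) ^ n / n.factorial  :=
          Finset.sum_le_sum fun n _ => hterm n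
      _ ≤ Real.exp (1 / k) := Real.sum_le_exp_of_nonneg (by positivity) _

end
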